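/- arXiv:2309.11505 — 2 statements merged into one kernel-verified Lean document; each statement's English description precedes it below -/
import Mathlib

section
/- Sklar construction for the FGM copula: let θ ∈ [-1,1], let C_θ(u,v) = u·v·(1 + θ(1-u)(1-v)) be the FGM copula, and let F and G be the cumulative distribution functions of two probability measures on ℝ. Then there exists a probability measure μ on ℝ × ℝ such that μ((-∞, x] × (-∞, y]) = C_θ(F(x), G(y)) for all x, y ∈ ℝ; moreover the two marginals of μ are the measures with CDFs F and G respectively. -/
open MeasureTheory ENNReal

namespace FGMAux

/-- pushforward of ν ⊗ ν under min -/
noncomputable def pmin (ν : Measure ℝ) : Measure ℝ :=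
  (ν.prod ν).map (fun p => min p.1 p.2)

/-- pushforward of ν ⊗ ν under max -/
noncomputable def pmax (ν : Measure ℝ) : Measure ℝ :=
  (ν.prod ν).map (fun p => max p.1 p.2)

lemma measurable_min2 : Measurable (fun p : ℝ × ℝ => min p.1 p.2) :=
  measurable_fst.min measurable_snd

lemma measurable_max2 : Measurable (fun p : ℝ × ℝ => max p.1 p.2) :=
  measurable_fst.max measurable_snd

instance instPminProb (ν : Measure ℝ) [IsProbabilityMeasure ν] :
    IsProbabilityMeasure (pmin ν) :=
  Measure.isProbabilityMeasure_map measurable_min2.aemeasurable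

instance instPmaxProb (ν : Measure ℝ) [IsProbabilityMeasure ν] :
    IsProbabilityMeasure (pmax ν) :=
  Measure.isProbabilityMeasure_map measurable_max2.aemeasurable

lemma pmax_Iic (ν : Measure ℝ) [IsProbabilityMeasure ν] (x : ℝ) :
    pmax ν (Set.Iic x) = ν (Set.Iic x) * ν (Set.Iic x) := by
  rw [pmax, Measure.map_apply measurable_max2 measurableSet_Iic]
  have h : (fun p : ℝ × ℝ => max p.1 p.2) ⁻¹' Set.Iic x
      = Set.Iic x ×ˢ Set.Iic x := by
    ext p; simp [max_le_iff, Prod.le_def]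
  rw [h, Measure.prod_prod]

lemma pmin_Iic_add (ν : Measure ℝ) [IsProbabilityMeasure ν] (x : ℝ) :
    pmin ν (Set.Iic x) + ν (Set.Iic x) * ν (Set.Iic x)
      = ν (Set.Iic x) + ν (Set.Iic x) := by
  rw [pmin, Measure.map_apply measurable_min2 measurableSet_Iic]
  have hpre : (fun p : ℝ × ℝ => min p.1 p.2) ⁻¹' Set.Iic x
      = (Set.Iic x ×ˢ (Set.univ : Set ℝ)) ∪ ((Set.univ : Set ℝ) ×ˢ Set.Iic x) := by
    ext p; simp [min_le_iff, Prod.le_def]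
  have hinter : (Set.Iic x ×ˢ (Set.univ : Set ℝ)) ∩ ((Set.univ : Set ℝ) ×ˢ Set.Iic x)
      = Set.Iic x ×ˢ Set.Iic x := by
    ext p; simp [Prod.le_def, and_comm]
  have key := measure_union_add_inter (μ := ν.prod ν)
    (s := Set.Iic x ×ˢ (Set.univ : Set ℝ)) (t := (Set.univ : Set ℝ) ×ˢ Set.Iic x)
    (MeasurableSet.univ.prod measurableSet_Iic)
  rw [hinter, Measure.prod_prod, Measure.prod_prod, Measure.prod_prod,
    measure_univ, mul_one, one_mul] at key
  rw [hpre, key]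

lemma pmin_Iic_toReal (ν : Measure ℝ) [IsProbabilityMeasure ν] (x : ℝ) :
    (pmin ν (Set.Iic x)).toReal
      = 2 * (ν (Set.Iic x)).toReal - (ν (Set.Iic x)).toReal ^ 2 := by
  have h := congrArg ENNReal.toReal (pmin_Iic_add ν x)
  rw [ENNReal.toReal_add (measure_ne_top _ _)
      (ENNReal.mul_ne_top (measure_ne_top _ _) (measure_ne_top _ _)),
    ENNReal.toReal_add (measure_ne_top _ _) (measure_ne_top _ _),
    ENNReal.toReal_mul] at h
  nlinarith [h]

lemma pmax_Iic_toReal (ν : Measure ℝ) [IsProbabilityMeasure ν] (x : ℝ) :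
    (pmax ν (Set.Iic x)).toReal = (ν (Set.Iic x)).toReal ^ 2 := by
  rw [pmax_Iic, ENNReal.toReal_mul]; ring

lemma pmin_add_pmax (ν : Measure ℝ) [IsProbabilityMeasure ν] :
    pmin ν + pmax ν = ν + ν := by
  ext s hs
  have hind : Measurable (s.indicator (1 : ℝ → ℝ≥0∞)) := measurable_one.indicator hs
  have h1 : pmin ν s = ∫⁻ p, s.indicator (1 : ℝ → ℝ≥0∞) (min p.1 p.2) ∂(ν.prod ν) := by
    rw [← lintegral_indicator_one hs, pmin, lintegral_map hind measurable_min2]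
  have h2 : pmax ν s = ∫⁻ p, s.indicator (1 : ℝ → ℝ≥0∞) (max p.1 p.2) ∂(ν.prod ν) := by
    rw [← lintegral_indicator_one hs, pmax, lintegral_map hind measurable_max2]
  rw [Measure.add_apply, Measure.add_apply, h1, h2,
    ← lintegral_add_left (hind.comp' measurable_min2)]
  have hpt : (fun p : ℝ × ℝ =>
      s.indicator (1 : ℝ → ℝ≥0∞) (min p.1 p.2) + s.indicator 1 (max p.1 p.2))
      = fun p : ℝ × ℝ => s.indicator 1 p.1 + s.indicator 1 p.2 := by
    funext p
    rcases le_total p.1 p.2 with h | h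
    · rw [min_eq_left h, max_eq_right h]
    · rw [min_eq_right h, max_eq_left h, add_comm]
  rw [hpt, lintegral_add_left (hind.comp' measurable_fst)]
  have hf : ∫⁻ p : ℝ × ℝ, s.indicator (1 : ℝ → ℝ≥0∞) p.1 ∂(ν.prod ν) = ν s := by
    rw [← lintegral_map hind measurable_fst, Measure.map_fst_prod, measure_univ,
      one_smul, lintegral_indicator_one hs]
  have hg : ∫⁻ p : ℝ × ℝ, s.indicator (1 : ℝ → ℝ≥0∞) p.2 ∂(ν.prod ν) = ν s := by
    rw [← lintegral_map hind measurable_snd, Measure.map_snd_prod, measure_univ,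
      one_smul, lintegral_indicator_one hs]
  rw [hf, hg]

end FGMAux

open FGMAux in
/-- Sklar construction for the FGM copula: given marginal probability measures on `ℝ`
with CDFs `F` and `G`, there is a probability measure on `ℝ × ℝ` whose joint CDF is
`C_θ(F(x), G(y))` and whose marginals are the given measures. -/
theorem fgm_sklar_construction
    (θ : ℝ) (hθ : θ ∈ Set.Icc (-1 : ℝ) 1)
    (C : ℝ → ℝ → ℝ)
    (hC : ∀ u v, C u v = u * v * (1 + θ * (1 - u) * (1 - v)))
    (ν₁ ν₂ : Measure ℝ) [IsProbabilityMeasure ν₁] [IsProbabilityMeasure ν₂]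
    (F G : ℝ → ℝ)
    (hF : ∀ x, F x = (ν₁ (Set.Iic x)).toReal)
    (hG : ∀ y, G y = (ν₂ (Set.Iic y)).toReal) :
    ∃ μ : Measure (ℝ × ℝ), IsProbabilityMeasure μ ∧
      (∀ x y : ℝ, (μ (Set.Iic x ×ˢ Set.Iic y)).toReal = C (F x) (G y)) ∧
      μ.map Prod.fst = ν₁ ∧ μ.map Prod.snd = ν₂ := by
  obtain ⟨hθ1, hθ2⟩ := hθ
  have hc1 : (0 : ℝ) ≤ (1 + θ) / 4 := by linarith
  have hc2 : (0 : ℝ) ≤ (1 - θ) / 4 := by linarith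
  set c1 : ℝ≥0∞ := ENNReal.ofReal ((1 + θ) / 4) with hc1def
  set c2 : ℝ≥0∞ := ENNReal.ofReal ((1 - θ) / 4) with hc2def
  set μ : Measure (ℝ × ℝ) :=
    c1 • ((pmin ν₁).prod (pmin ν₂)) + c1 • ((pmax ν₁).prod (pmax ν₂))
    + c2 • ((pmin ν₁).prod (pmax ν₂)) + c2 • ((pmax ν₁).prod (pmin ν₂)) with hμdef
  have hc1ne : c1 ≠ ⊤ := ENNReal.ofReal_ne_top
  have hc2ne : c2 ≠ ⊤ := ENNReal.ofReal_ne_top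
  have hc1toReal : c1.toReal = (1 + θ) / 4 := ENNReal.toReal_ofReal hc1
  have hc2toReal : c2.toReal = (1 - θ) / 4 := ENNReal.toReal_ofReal hc2
  refine ⟨μ, ?_, ?_, ?_, ?_⟩
  · constructor
    rw [hμdef]
    simp only [Measure.add_apply, Measure.smul_apply, smul_eq_mul, measure_univ,
      mul_one]
    rw [hc1def, hc2def, ← ENNReal.ofReal_add hc1 hc1, ← ENNReal.ofReal_add (by linarith) hc2,
      ← ENNReal.ofReal_add (by linarith) hc2,
      show (1 + θ) / 4 + (1 + θ) / 4 + (1 - θ) / 4 + (1 - θ) / 4 = (1 : ℝ) by ring,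
      ENNReal.ofReal_one]
  · intro x y
    rw [hμdef]
    simp only [Measure.add_apply, Measure.smul_apply, smul_eq_mul, Measure.prod_prod]
    rw [ENNReal.toReal_add, ENNReal.toReal_add, ENNReal.toReal_add]
    · simp only [ENNReal.toReal_mul]
      rw [pmin_Iic_toReal, pmin_Iic_toReal, pmax_Iic_toReal, pmax_Iic_toReal,
        hc1toReal, hc2toReal, hC, hF, hG]
      ring
    all_goals finiteness
  · rw [hμdef]
    rw [Measure.map_add _ _ measurable_fst, Measure.map_add _ _ measurable_fst,
      Measure.map_add _ _ measurable_fst]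
    rw [Measure.map_smul, Measure.map_smul, Measure.map_smul, Measure.map_smul]
    rw [Measure.map_fst_prod, Measure.map_fst_prod, Measure.map_fst_prod,
      Measure.map_fst_prod]
    simp only [measure_univ, one_smul]
    have hsum : c1 + c2 = ENNReal.ofReal (1 / 2) := by
      rw [hc1def, hc2def, ← ENNReal.ofReal_add hc1 hc2,
        show (1 + θ) / 4 + (1 - θ) / 4 = (1 : ℝ) / 2 by ring]
    have : c1 • pmin ν₁ + c1 • pmax ν₁ + c2 • pmin ν₁ + c2 • pmax ν₁
        = (c1 + c2) • (pmin ν₁ + pmax ν₁) := by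
      rw [smul_add, add_smul, add_smul]
      abel
    rw [this, pmin_add_pmax, hsum]
    have h2 : ENNReal.ofReal (1 / 2) * 2 = 1 := by
      rw [ENNReal.ofReal_div_of_pos (by norm_num), ENNReal.ofReal_one,
        ENNReal.ofReal_ofNat]
      exact ENNReal.div_mul_cancel (by norm_num) (by norm_num)
    ext s hs
    simp only [Measure.smul_apply, Measure.add_apply, smul_eq_mul]
    rw [← two_mul, ← mul_assoc, h2, one_mul]
  · rw [hμdef]
    rw [Measure.map_add _ _ measurable_snd, Measure.map_add _ _ measurable_snd,
      Measure.map_add _ _ measurable_snd]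
    rw [Measure.map_smul, Measure.map_smul, Measure.map_smul, Measure.map_smul]
    rw [Measure.map_snd_prod, Measure.map_snd_prod, Measure.map_snd_prod,
      Measure.map_snd_prod]
    simp only [measure_univ, one_smul]
    have hsum : c1 + c2 = ENNReal.ofReal (1 / 2) := by
      rw [hc1def, hc2def, ← ENNReal.ofReal_add hc1 hc2,
        show (1 + θ) / 4 + (1 - θ) / 4 = (1 : ℝ) / 2 by ring]
    have : c1 • pmin ν₂ + c1 • pmax ν₂ + c2 • pmax ν₂ + c2 • pmin ν₂
        = (c1 + c2) • (pmin ν₂ + pmax ν₂) := by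
      rw [smul_add, add_smul, add_smul]
      abel
    rw [this, pmin_add_pmax, hsum]
    have h2 : ENNReal.ofReal (1 / 2) * 2 = 1 := by
      rw [ENNReal.ofReal_div_of_pos (by norm_num), ENNReal.ofReal_one,
        ENNReal.ofReal_ofNat]
      exact ENNReal.div_mul_cancel (by norm_num) (by norm_num)
    ext s hs
    simp only [Measure.smul_apply, Measure.add_apply, smul_eq_mul]
    rw [← two_mul, ← mul_assoc, h2, one_mul]
end

section
/- Pairing the PIT transforms: if X and Y are real-valued random variables (possibly dependent) whose CDFs F and G are continuous, then each of the transformed variables U = F(X) and V = G(Y) is uniformly distributed on [0,1], and the function C(u,v) = P(F(X) ≤ u, G(Y) ≤ v), u,v ∈ [0,1], satisfies P(X ≤ x, Y ≤ y) = C(F(x), G(y)) for all continuity-compatible points, i.e. for all x, y ∈ ℝ one has P(X ≤ x, Y ≤ y) = P(F(X) ≤ F(x), G(Y) ≤ G(y)). -/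
open MeasureTheory Set Filter ProbabilityTheory

/-! A continuous CDF `F` has sublevel sets `{F ≤ c}`, `0 ≤ c < 1`, of the form `(-∞, t]` with
`F t = c`, so `P(F(X) ≤ c) = c`. For `c = F x` this says that `{F ≤ F x}` and `(-∞, x]` differ by a
null set of the law of `X`; hence the rectangles `{F ≤ F x} × {G ≤ G y}` and `(-∞, x] × (-∞, y]`
agree almost everywhere for the joint law. -/

theorem Monotone.exists_apply_eq_preimage_Iic_eq {α β : Type*}
    [ConditionallyCompleteLinearOrder α] [TopologicalSpace α] [OrderTopology α]
    [DenselyOrdered α] [NoMaxOrder α]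
    [LinearOrder β] [TopologicalSpace β] [OrderClosedTopology β]
    {f : α → β} (hf : Monotone f) (hfc : Continuous f) {c : β}
    (hne : (f ⁻¹' Iic c).Nonempty) (hbdd : BddAbove (f ⁻¹' Iic c)) :
    ∃ t, f t = c ∧ f ⁻¹' Iic c = Iic t := by
  set t := sSup (f ⁻¹' Iic c)
  have ht : f t ≤ c := (isClosed_Iic.preimage hfc).csSup_mem hne hbdd
  refine ⟨t, ht.antisymm ?_, ext fun z => ⟨fun hz => le_csSup hbdd hz, fun hz => (hf hz).trans ht⟩⟩
  by_contra! hlt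
  obtain ⟨z, hzc, hzt⟩ := ((hfc.continuousAt.eventually_lt continuousAt_const hlt).filter_mono
    (nhdsWithin_le_nhds (s := Ioi t)) |>.and self_mem_nhdsWithin).exists
  exact (le_csSup hbdd hzc.le).not_gt hzt

theorem volume_restrict_Icc_zero_one_Iic (c : ℝ) :
    volume.restrict (Icc (0 : ℝ) 1) (Iic c) = ENNReal.ofReal (min c 1) := by
  rw [Measure.restrict_apply measurableSet_Iic, ← Ici_inter_Iic, inter_left_comm, Iic_inter_Iic,
    Ici_inter_Iic, Real.volume_Icc, sub_zero]

namespace ProbabilityTheory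

variable {ν : Measure ℝ} [IsProbabilityMeasure ν]

theorem measure_cdf_preimage_Iic (hc : Continuous (cdf ν)) (c : ℝ) :
    ν (cdf ν ⁻¹' Iic c) = ENNReal.ofReal (min c 1) := by
  rcases le_or_gt 1 c with h1c | hc1
  · have : cdf ν ⁻¹' Iic c = univ := eq_univ_of_forall fun z => (cdf_le_one ν z).trans h1c
    rw [this, measure_univ, min_eq_right h1c, ENNReal.ofReal_one]
  rw [min_eq_left hc1.le]
  rcases (cdf ν ⁻¹' Iic c).eq_empty_or_nonempty with hemp | hne
  · obtain hc0 : c ≤ 0 := by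
      by_contra! hc0
      obtain ⟨z, hz⟩ := ((tendsto_cdf_atBot ν).eventually (eventually_lt_nhds hc0)).exists
      exact hemp.subset (show z ∈ cdf ν ⁻¹' Iic c from hz.le)
    rw [hemp, measure_empty, ENNReal.ofReal_of_nonpos hc0]
  obtain ⟨M, hM⟩ := ((tendsto_cdf_atTop ν).eventually (eventually_gt_nhds hc1)).exists
  have hbdd : BddAbove (cdf ν ⁻¹' Iic c) :=
    ⟨M, fun z hz => le_of_not_gt fun hMz => ((monotone_cdf ν hMz.le).trans hz).not_gt hM⟩
  obtain ⟨t, rfl, heq⟩ := (monotone_cdf ν).exists_apply_eq_preimage_Iic_eq hc hne hbdd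
  rw [heq, ofReal_cdf]

theorem map_cdf_eq_volume_restrict_Icc (hc : Continuous (cdf ν)) :
    ν.map (cdf ν) = volume.restrict (Icc 0 1) := by
  have : IsProbabilityMeasure (ν.map (cdf ν)) := Measure.isProbabilityMeasure_map hc.aemeasurable
  refine Measure.ext_of_Iic _ _ fun c => ?_
  rw [Measure.map_apply hc.measurable measurableSet_Iic, measure_cdf_preimage_Iic hc,
    volume_restrict_Icc_zero_one_Iic]

theorem cdf_preimage_Iic_cdf_ae_eq_Iic (hc : Continuous (cdf ν)) (x : ℝ) :
    cdf ν ⁻¹' Iic (cdf ν x) =ᵐ[ν] Iic x := by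
  have hsub : Iic x ⊆ cdf ν ⁻¹' Iic (cdf ν x) := fun z hz => monotone_cdf ν hz
  refine (ae_eq_of_subset_of_measure_ge hsub ?_
    measurableSet_Iic.nullMeasurableSet (measure_ne_top ν _)).symm
  rw [measure_cdf_preimage_Iic hc, min_eq_left (cdf_le_one ν x), ofReal_cdf]

end ProbabilityTheory

theorem MeasureTheory.Measure.measure_prod_congr_of_ae_eq_map {α β : Type*}
    [MeasurableSpace α] [MeasurableSpace β] {μ : Measure (α × β)} {s s' : Set α} {t t' : Set β}
    (hs : s =ᵐ[μ.map Prod.fst] s') (ht : t =ᵐ[μ.map Prod.snd] t') :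
    μ (s ×ˢ t) = μ (s' ×ˢ t') :=
  measure_congr <| (ae_eq_comp measurable_fst.aemeasurable hs).inter
    (ae_eq_comp measurable_snd.aemeasurable ht)

/-- Pairing the probability integral transforms: for a joint law `μ` of `(X, Y)` on `ℝ × ℝ`
with continuous marginal CDFs `F` and `G`, each of `F(X)` and `G(Y)` is uniform on `[0,1]`,
and `P(X ≤ x, Y ≤ y) = P(F(X) ≤ F(x), G(Y) ≤ G(y))` for all `x, y`. -/
theorem paired_probability_integral_transform
    (μ : Measure (ℝ × ℝ)) [IsProbabilityMeasure μ]
    (F G : ℝ → ℝ)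
    (hF : ∀ x, F x = ((μ.map Prod.fst) (Set.Iic x)).toReal)
    (hG : ∀ y, G y = ((μ.map Prod.snd) (Set.Iic y)).toReal)
    (hFcont : Continuous F) (hGcont : Continuous G) :
    (μ.map Prod.fst).map F = volume.restrict (Set.Icc (0 : ℝ) 1) ∧
    (μ.map Prod.snd).map G = volume.restrict (Set.Icc (0 : ℝ) 1) ∧
    ∀ x y : ℝ, μ (Set.Iic x ×ˢ Set.Iic y)
        = μ {p : ℝ × ℝ | F p.1 ≤ F x ∧ G p.2 ≤ G y} := by
  have : IsProbabilityMeasure (μ.map Prod.fst) := Measure.isProbabilityMeasure_map (by fun_prop)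
  have : IsProbabilityMeasure (μ.map Prod.snd) := Measure.isProbabilityMeasure_map (by fun_prop)
  obtain rfl : F = cdf (μ.map Prod.fst) := funext fun x => by rw [hF, cdf_eq_real, measureReal_def]
  obtain rfl : G = cdf (μ.map Prod.snd) := funext fun y => by rw [hG, cdf_eq_real, measureReal_def]
  exact ⟨map_cdf_eq_volume_restrict_Icc hFcont, map_cdf_eq_volume_restrict_Icc hGcont,
    fun x y => Measure.measure_prod_congr_of_ae_eq_map
      (cdf_preimage_Iic_cdf_ae_eq_Iic hFcont x).symm (cdf_preimage_Iic_cdf_ae_eq_Iic hGcont y).symm⟩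
end
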